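/- arXiv:2202.03412 — 3 statements merged into one kernel-verified Lean document; each statement's English description precedes it below -/
import Mathlib

section
/- Let x, y be elements of a division ring with x ≠ y, x ≠ 1, y ≠ 1, and x, y nonzero. Define u = (1-y)⁻¹·(x-y)·x·(x-y)⁻¹·(1-y) and v = (1-x)⁻¹·(y-x)·y·(y-x)⁻¹·(1-x). Then (1-u)⁻¹·(1-y)⁻¹ = (1-v)⁻¹·(1-x)⁻¹, provided all inverses exist. -/
private lemma conj_one_sub {D : Type*} [DivisionRing D] (a b c : D)
    (ha : a ≠ 0) (hb : b ≠ 0) :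
    1 - b⁻¹ * a * c * a⁻¹ * b = b⁻¹ * (a * (1 - c) * a⁻¹) * b := by
  have : b⁻¹ * (a * (1 - c) * a⁻¹) * b
      = b⁻¹ * (a * a⁻¹) * b - b⁻¹ * a * c * a⁻¹ * b := by
    noncomm_ring
  rw [this, mul_inv_cancel₀ ha, mul_one, inv_mul_cancel₀ hb]

private lemma conj_inv_mul {D : Type*} [DivisionRing D] (a b c : D)
    (ha : a ≠ 0) (hb : b ≠ 0) (hc : 1 - c ≠ 0) :
    (b⁻¹ * (a * (1 - c) * a⁻¹) * b)⁻¹ * b⁻¹ = b⁻¹ * a * (1 - c)⁻¹ * a⁻¹ := by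
  have hM : (b⁻¹ * a * (1 - c)⁻¹ * a⁻¹ * b) * (b⁻¹ * (a * (1 - c) * a⁻¹) * b) = 1 := by
    simp [mul_assoc, mul_inv_cancel_left₀, inv_mul_cancel_left₀, inv_mul_cancel₀,
      ha, hb, hc]
  rw [inv_eq_of_mul_eq_one_left hM, mul_assoc, mul_inv_cancel₀ hb, mul_one]

theorem stmt_1 {D : Type*} [DivisionRing D] (x y u v : D)
    (hx : x ≠ 0) (hy : y ≠ 0) (hxy : x ≠ y) (hx1 : x ≠ 1) (hy1 : y ≠ 1)
    (hu : u = (1 - y)⁻¹ * (x - y) * x * (x - y)⁻¹ * (1 - y))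
    (hv : v = (1 - x)⁻¹ * (y - x) * y * (y - x)⁻¹ * (1 - x))
    (h1u : 1 - u ≠ 0) (h1v : 1 - v ≠ 0) :
    (1 - u)⁻¹ * (1 - y)⁻¹ = (1 - v)⁻¹ * (1 - x)⁻¹ := by
  have hp : (1 : D) - x ≠ 0 := sub_ne_zero.mpr (Ne.symm hx1)
  have hq : (1 : D) - y ≠ 0 := sub_ne_zero.mpr (Ne.symm hy1)
  have ha : x - y ≠ 0 := sub_ne_zero.mpr hxy
  have ha' : y - x ≠ 0 := sub_ne_zero.mpr (Ne.symm hxy)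
  have e1 : (1 - u)⁻¹ * (1 - y)⁻¹ = (1 - y)⁻¹ * (x - y) * (1 - x)⁻¹ * (x - y)⁻¹ := by
    rw [hu, conj_one_sub _ _ _ ha hq, conj_inv_mul _ _ _ ha hq hp]
  have e2 : (1 - v)⁻¹ * (1 - x)⁻¹ = (1 - x)⁻¹ * (y - x) * (1 - y)⁻¹ * (y - x)⁻¹ := by
    rw [hv, conj_one_sub _ _ _ ha' hp, conj_inv_mul _ _ _ ha' hp hq]
  rw [e1, e2]
  have hd : x - y = (1 - y) - (1 - x) := by noncomm_ring
  have key : (1 - y)⁻¹ * (x - y) * (1 - x)⁻¹ = (1 - x)⁻¹ * (x - y) * (1 - y)⁻¹ := by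
    have h1 : (1 - y)⁻¹ * (x - y) * (1 - x)⁻¹ = (1 - x)⁻¹ - (1 - y)⁻¹ := by
      rw [hd, mul_sub, sub_mul, inv_mul_cancel₀ hq, one_mul, mul_assoc,
        mul_inv_cancel₀ hp, mul_one]
    have h2 : (1 - x)⁻¹ * (x - y) * (1 - y)⁻¹ = (1 - x)⁻¹ - (1 - y)⁻¹ := by
      rw [hd, mul_sub, sub_mul, mul_assoc, mul_inv_cancel₀ hq, mul_one,
        inv_mul_cancel₀ hp, one_mul]
    rw [h1, h2]
  have hyx : y - x = -(x - y) := by noncomm_ring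
  rw [hyx, inv_neg, key]
  noncomm_ring
end

section
/- With the same setup as the N=1 non-Abelian K^(1) map, u = (1-y)⁻¹(x-y)x(x-y)⁻¹(1-y) and v = (1-x)⁻¹(y-x)y(y-x)⁻¹(1-x), the second compatibility condition (1-u)⁻¹·u·(1-y)⁻¹·y = (1-v)⁻¹·v·(1-x)⁻¹·x holds, provided all inverses exist. -/
/-!
With `c = (1 - y)⁻¹ * (x - y)` we have `u = c * x * c⁻¹`, and conjugation commutes with
`w ↦ (1 - w)⁻¹ * w`; by the resolvent identity the left-hand side becomes
`((1 - x)⁻¹ - (1 - y)⁻¹) * (x * (x - y)⁻¹ * y)`. Swapping `x` and `y` gives the right-hand side,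
and the two agree because `x * (x - y)⁻¹ * y = y * (x - y)⁻¹ * x` in any division ring.
-/

section DivisionRing

variable {D : Type*} [DivisionRing D]

lemma one_sub_conj {g : D} (hg : g ≠ 0) (w : D) : 1 - g * w * g⁻¹ = g * (1 - w) * g⁻¹ := by
  rw [mul_sub, sub_mul, mul_one, mul_inv_cancel₀ hg]

lemma inv_one_sub_mul_conj {g : D} (hg : g ≠ 0) (w : D) :
    (1 - g * w * g⁻¹)⁻¹ * (g * w * g⁻¹) = g * ((1 - w)⁻¹ * w) * g⁻¹ := by
  rw [one_sub_conj hg, mul_inv_rev, mul_inv_rev, inv_inv]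
  simp only [mul_assoc, inv_mul_cancel_left₀ hg]

lemma mul_inv_sub_mul_comm (x y : D) : x * (x - y)⁻¹ * y = y * (x - y)⁻¹ * x := by
  rcases eq_or_ne x y with rfl | hxy
  · rfl
  have ha : x - y ≠ 0 := sub_ne_zero.mpr hxy
  calc x * (x - y)⁻¹ * y = ((x - y) + y) * (x - y)⁻¹ * y := by rw [sub_add_cancel]
    _ = y + y * (x - y)⁻¹ * y := by rw [add_mul, mul_inv_cancel₀ ha, add_mul, one_mul]
    _ = y * (x - y)⁻¹ * ((x - y) + y) := by
      rw [mul_add, inv_mul_cancel_right₀ ha]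
    _ = y * (x - y)⁻¹ * x := by rw [sub_add_cancel]

/-- The first component `u` of the K⁽¹⁾ map; the second one is `v = kOneFst y x`. -/
def kOneFst (x y : D) : D := (1 - y)⁻¹ * (x - y) * x * (x - y)⁻¹ * (1 - y)

lemma inv_one_sub_kOneFst_mul {x y : D} (hxy : x ≠ y) (hx1 : x ≠ 1) (hy1 : y ≠ 1) :
    (1 - kOneFst x y)⁻¹ * kOneFst x y * (1 - y)⁻¹ * y
      = ((1 - x)⁻¹ - (1 - y)⁻¹) * (x * (x - y)⁻¹ * y) := by
  have hp : 1 - x ≠ 0 := sub_ne_zero.mpr hx1.symm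
  have hq : 1 - y ≠ 0 := sub_ne_zero.mpr hy1.symm
  have ha : x - y ≠ 0 := sub_ne_zero.mpr hxy
  set c := (1 - y)⁻¹ * (x - y) with hc
  have hc0 : c ≠ 0 := mul_ne_zero (inv_ne_zero hq) ha
  have hc_inv : c⁻¹ * (1 - y)⁻¹ = (x - y)⁻¹ := by
    rw [hc, mul_inv_rev, inv_inv, mul_assoc, mul_inv_cancel₀ hq, mul_one]
  have hc_resolvent : c * (1 - x)⁻¹ = (1 - x)⁻¹ - (1 - y)⁻¹ := by
    rw [hc, ← neg_sub (1 - y)⁻¹, inv_sub_inv' hq hp]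
    noncomm_ring
  have hu : kOneFst x y = c * x * c⁻¹ := by
    rw [kOneFst, hc, mul_inv_rev, inv_inv, mul_assoc (c * x)]
  rw [hu, inv_one_sub_mul_conj hc0, mul_assoc _ c⁻¹, hc_inv, ← hc_resolvent]
  simp only [mul_assoc]

end DivisionRing

theorem stmt_2_general {D : Type*} [DivisionRing D] (x y u v : D)
    (hxy : x ≠ y) (hx1 : x ≠ 1) (hy1 : y ≠ 1)
    (hu : u = (1 - y)⁻¹ * (x - y) * x * (x - y)⁻¹ * (1 - y))
    (hv : v = (1 - x)⁻¹ * (y - x) * y * (y - x)⁻¹ * (1 - x)) :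
    (1 - u)⁻¹ * u * (1 - y)⁻¹ * y = (1 - v)⁻¹ * v * (1 - x)⁻¹ * x := by
  rw [show u = kOneFst x y from hu, show v = kOneFst y x from hv,
    inv_one_sub_kOneFst_mul hxy hx1 hy1, inv_one_sub_kOneFst_mul hxy.symm hy1 hx1,
    mul_inv_sub_mul_comm y x,
    ← neg_sub (1 - x)⁻¹, ← neg_sub x y, inv_neg, mul_neg, neg_mul, neg_mul, mul_neg, neg_neg]

theorem stmt_2 {D : Type*} [DivisionRing D] (x y u v : D)
    (hx : x ≠ 0) (hy : y ≠ 0) (hxy : x ≠ y) (hx1 : x ≠ 1) (hy1 : y ≠ 1)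
    (hu : u = (1 - y)⁻¹ * (x - y) * x * (x - y)⁻¹ * (1 - y))
    (hv : v = (1 - x)⁻¹ * (y - x) * y * (y - x)⁻¹ * (1 - x))
    (h1u : 1 - u ≠ 0) (h1v : 1 - v ≠ 0) :
    (1 - u)⁻¹ * u * (1 - y)⁻¹ * y = (1 - v)⁻¹ * v * (1 - x)⁻¹ * x :=
  stmt_2_general x y u v hxy hx1 hy1 hu hv
end

section
/- In the setting of the previous statement (N=2 K^(1) map), if additionally x²·x¹ = p and y²·y¹ = q where p, q are central elements of D, then u²·u¹ = p and v²·v¹ = q, i.e. under the centrality assumption the products are invariants of the map. -/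
/-!
Writing `g = (1 - y²)⁻¹ (x² - y²)` and `h = (x¹ - y¹)⁻¹ (1 - y¹)`, the map reads
`u² = g x¹ h` and `u¹ = h⁻¹ x² g⁻¹`, so `u² u¹ = g (x¹ x²) g⁻¹`. Since `x² x¹ = p` is central,
so is `x¹ x² = p`, and conjugation fixes it. Exchanging the roles of `x` and `y` gives `v² v¹ = q`.
-/

section GroupWithZero

variable {G₀ : Type*} [GroupWithZero G₀]

theorem mul_eq_of_mul_eq_of_mem_center {a b p : G₀} (hp : p ∈ Set.center G₀) (h : a * b = p) :
    b * a = p := by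
  rcases eq_or_ne b 0 with rfl | hb
  · rw [← h, mul_zero, zero_mul]
  · calc b * a = b * a * b * b⁻¹ := (mul_inv_cancel_right₀ hb _).symm
      _ = p * b * b⁻¹ := by rw [mul_assoc b, h, hp.comm b]
      _ = p := mul_inv_cancel_right₀ hb p

theorem mul_mul_mul_inv_mul_inv_eq_of_mem_center {g h z₁ z₂ p : G₀} (hg : g ≠ 0) (hh : h ≠ 0)
    (hp : p ∈ Set.center G₀) (hz : z₁ * z₂ = p) : g * z₁ * h * (h⁻¹ * z₂ * g⁻¹) = p := by
  calc g * z₁ * h * (h⁻¹ * z₂ * g⁻¹) = g * (z₁ * z₂) * g⁻¹ := by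
        simp only [mul_assoc, mul_inv_cancel_left₀ hh]
    _ = p := by rw [hz, ← hp.comm g, mul_inv_cancel_right₀ hg]

end GroupWithZero

theorem kOneMap_mul_eq_of_mem_center {D : Type*} [DivisionRing D] {a₁ a₂ b₁ b₂ z₁ z₂ p : D}
    (ha₁ : a₁ ≠ b₁) (ha₂ : a₂ ≠ b₂) (hb₁ : 1 - b₁ ≠ 0) (hb₂ : 1 - b₂ ≠ 0)
    (hp : p ∈ Set.center D) (hz : z₁ * z₂ = p) :
    (1 - b₂)⁻¹ * (a₂ - b₂) * z₁ * (a₁ - b₁)⁻¹ * (1 - b₁) *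
      ((1 - b₁)⁻¹ * (a₁ - b₁) * z₂ * (a₂ - b₂)⁻¹ * (1 - b₂)) = p := by
  have hg : (1 - b₂)⁻¹ * (a₂ - b₂) ≠ 0 := mul_ne_zero (inv_ne_zero hb₂) (sub_ne_zero.2 ha₂)
  have hh : (a₁ - b₁)⁻¹ * (1 - b₁) ≠ 0 := mul_ne_zero (inv_ne_zero (sub_ne_zero.2 ha₁)) hb₁
  simpa only [mul_inv_rev, inv_inv, mul_assoc] using
    mul_mul_mul_inv_mul_inv_eq_of_mem_center hg hh hp hz

theorem stmt_10 {D : Type*} [DivisionRing D] (x1 x2 y1 y2 u1 u2 v1 v2 p q : D)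
    (hp : p ∈ Set.center D) (hq : q ∈ Set.center D)
    (hxp : x2 * x1 = p) (hyq : y2 * y1 = q)
    (hxy1 : x1 ≠ y1) (hxy2 : x2 ≠ y2)
    (h1x1 : 1 - x1 ≠ 0) (h1x2 : 1 - x2 ≠ 0) (h1y1 : 1 - y1 ≠ 0) (h1y2 : 1 - y2 ≠ 0)
    (hu1 : u1 = (1 - y1)⁻¹ * (x1 - y1) * x2 * (x2 - y2)⁻¹ * (1 - y2))
    (hu2 : u2 = (1 - y2)⁻¹ * (x2 - y2) * x1 * (x1 - y1)⁻¹ * (1 - y1))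
    (hv1 : v1 = (1 - x1)⁻¹ * (y1 - x1) * y2 * (y2 - x2)⁻¹ * (1 - x2))
    (hv2 : v2 = (1 - x2)⁻¹ * (y2 - x2) * y1 * (y1 - x1)⁻¹ * (1 - x1)) :
    u2 * u1 = p ∧ v2 * v1 = q := by
  subst hu1 hu2 hv1 hv2
  exact ⟨kOneMap_mul_eq_of_mem_center hxy1 hxy2 h1y1 h1y2 hp
      (mul_eq_of_mul_eq_of_mem_center hp hxp),
    kOneMap_mul_eq_of_mem_center hxy1.symm hxy2.symm h1x1 h1x2 hq
      (mul_eq_of_mul_eq_of_mem_center hq hyq)⟩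
end
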